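/- Let ξ ∈ D[√2] = Z[1/√2]. The equation t†t = ξ has a solution t ∈ D[ω] if and only if ξ is doubly positive (ξ ≥ 0 and ξ• ≥ 0) and there exists t' ∈ D[ω] and a unit u of Z[√2] with t'†t' = uξ. -/

import Mathlib

noncomputable def ω : ℂ := (1 + Complex.I) / (Real.sqrt 2 : ℂ)

noncomputable def zω (a b c d : ℤ) : ℂ := a * ω ^ 3 + b * ω ^ 2 + c * ω + d

/-- Membership in D[ω] = ℤ[1/√2, i]. -/
def inDω (t : ℂ) : Prop := ∃ k : ℕ, ∃ a b c d : ℤ, (Real.sqrt 2 : ℂ) ^ k * t = zω a b c d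

/-- u is a unit of ℤ[√2] (viewed inside ℝ). -/
def unitZsqrt2 (u : ℝ) : Prop :=
  ∃ p q p' q' : ℤ, u = (p : ℝ) + q * Real.sqrt 2 ∧
    ((p : ℝ) + q * Real.sqrt 2) * ((p' : ℝ) + q' * Real.sqrt 2) = 1

/-!
Write `t ∈ D[ω]` as `√2 ^ k * t = a ω³ + b ω² + c ω + d`. Then
`2 ^ k * t†t = (a² + b² + c² + d²) + (ab + bc + cd - ad)√2`, and its `•`-conjugate is again a
squared modulus, namely that of the image of `t` under `ω ↦ ω³`; so every `t†t` is doubly positive.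
Conversely, if `t'†t' = uξ` with `ξ ≠ 0` doubly positive, then the unit `u` is doubly positive,
hence of norm `1` with positive rational part. Pell theory makes it a power of the fundamental
solution `3 + 2√2 = (1 + √2)²`, so `u = v²` and `t = v⁻¹ t'` solves `t†t = ξ`.
-/

open Complex Zsqrtd

/-- `star` on `ℤ√2` is the paper's `•`: `φ (star z) = (φ z)•`. -/
local notation "φ" => Zsqrtd.toReal (d := 2) zero_le_two

theorem sqrt_two_sq : √2 ^ 2 = 2 := Real.sq_sqrt zero_le_two

theorem toReal_two_apply (z : ℤ√2) : φ z = z.re + z.im * √2 := by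
  simp [toReal_apply]

theorem toReal_two_injective : Function.Injective φ :=
  toReal_injective _ fun n h => by simpa [← h] using Int.sq_ne_two_mod_four n

theorem toReal_two_star (z : ℤ√2) : φ (star z) = z.re - z.im * √2 := by
  rw [toReal_two_apply, re_star, im_star]; push_cast; ring

theorem toReal_two_mul_toReal_two_star (z : ℤ√2) : φ z * φ (star z) = z.norm := by
  rw [← map_mul, ← norm_eq_mul_conj, map_intCast]

theorem toReal_two_add_toReal_two_star (z : ℤ√2) : φ z + φ (star z) = 2 * z.re := by
  rw [toReal_two_apply, toReal_two_star]; ring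

theorem pos_toReal_two_of_isUnit {w : ℤ√2} (hw : IsUnit w) {x : ℝ} (hx : 0 < x)
    (h : 0 ≤ φ w * x) : 0 < φ w :=
  (nonneg_of_mul_nonneg_left h hx).lt_of_ne (hw.map φ).ne_zero.symm

theorem exists_isUnit_of_unitZsqrt2 {u : ℝ} (hu : unitZsqrt2 u) :
    ∃ w : ℤ√2, IsUnit w ∧ u = φ w := by
  obtain ⟨p, q, p', q', rfl, h⟩ := hu
  refine ⟨⟨p, q⟩, IsUnit.of_mul_eq_one ⟨p', q'⟩ (toReal_two_injective ?_), ?_⟩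
  · simpa only [map_mul, map_one, toReal_two_apply] using h
  · rw [toReal_two_apply]

theorem isFundamental_three_two :
    Pell.IsFundamental (Pell.Solution₁.mk 3 2 (by norm_num) : Pell.Solution₁ 2) := by
  refine ⟨by simp, by simp, fun {b} hb => ?_⟩
  by_contra! h
  have hx : b.x = 2 := by rw [Pell.Solution₁.x_mk] at h; omega
  have hb := b.prop
  rw [hx] at hb
  omega

theorem exists_eq_sq_of_norm_eq_one {w : ℤ√2} (hn : w.norm = 1) (hre : 0 < w.re) :
    ∃ v : ℤ√2, w = v ^ 2 := by
  wlog him : 0 ≤ w.im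
  · obtain ⟨v, hv⟩ := this (w := star w) (by rwa [Zsqrtd.norm_conj]) hre (by rw [im_star]; omega)
    exact ⟨star v, by rw [← star_pow, ← hv, star_star]⟩
  obtain ⟨n, hwn⟩ := isFundamental_three_two.eq_pow_of_nonneg
    (a := ⟨w, norm_eq_one_iff_mem_unitary.mp hn⟩) hre him
  refine ⟨⟨1, 1⟩ ^ n, ?_⟩ -- `3 + 2√2 = (1 + √2)²`
  have : w = (⟨3, 2⟩ : ℤ√2) ^ n := congrArg Subtype.val hwn
  rw [this, ← pow_mul, mul_comm, pow_mul]
  rfl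

theorem exists_eq_sq_of_isUnit {w : ℤ√2} (hw : IsUnit w) (h : 0 < φ w)
    (h' : 0 < φ (star w)) : ∃ v : ℤ√2, w = v ^ 2 := by
  have hnorm : 0 < (w.norm : ℝ) := toReal_two_mul_toReal_two_star w ▸ mul_pos h h'
  refine exists_eq_sq_of_norm_eq_one ?_ ?_
  · rcases Int.isUnit_iff.mp ((isUnit_iff_norm_isUnit w).mp hw) with h1 | h1
    · exact h1
    · rw [h1] at hnorm; norm_num at hnorm
  · have := toReal_two_add_toReal_two_star w
    exact_mod_cast (by linarith : (0 : ℝ) < w.re)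

/-- `x ∈ D[√2]` and `xb = x•`. -/
def IsGaloisConj (x xb : ℝ) : Prop :=
  ∃ z : ℤ√2, ∃ k : ℕ, x = φ z / 2 ^ k ∧ xb = φ (star z) / 2 ^ k

namespace IsGaloisConj

variable {x xb y yb : ℝ}

theorem of_int (a b : ℤ) (k : ℕ) :
    IsGaloisConj ((a + b * √2) / 2 ^ k) ((a - b * √2) / 2 ^ k) :=
  ⟨⟨a, b⟩, k, by rw [toReal_two_apply], by rw [toReal_two_star]⟩

theorem of_toReal_two (z : ℤ√2) : IsGaloisConj (φ z) (φ (star z)) :=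
  ⟨z, 0, by simp, by simp⟩

theorem mul (h : IsGaloisConj x xb) (h' : IsGaloisConj y yb) :
    IsGaloisConj (x * y) (xb * yb) := by
  obtain ⟨z, k, rfl, rfl⟩ := h
  obtain ⟨z', k', rfl, rfl⟩ := h'
  exact ⟨z * z', k + k', by rw [map_mul, pow_add, div_mul_div_comm], by
    rw [star_mul', map_mul, pow_add, div_mul_div_comm]⟩

theorem unique {xb' : ℝ} (h : IsGaloisConj x xb) (h' : IsGaloisConj x xb') : xb = xb' := by
  obtain ⟨z, k, hx, rfl⟩ := h
  obtain ⟨z', k', hx', rfl⟩ := h'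
  have hzz' : z * 2 ^ k' = z' * 2 ^ k := toReal_two_injective <| by
    simp only [map_mul, map_pow, map_ofNat]
    field_simp at hx hx' ⊢
    rw [← hx, ← hx']
    ring
  have := congrArg (fun z => φ (star z)) hzz'
  simp only [star_mul', star_pow, star_ofNat, map_mul, map_pow, map_ofNat] at this
  field_simp
  linarith

theorem conj_ne_zero (h : IsGaloisConj x xb) (hx : x ≠ 0) : xb ≠ 0 := by
  obtain ⟨z, k, rfl, rfl⟩ := h
  have hz : z ≠ 0 := by rintro rfl; simp at hx
  have : φ (star z) ≠ 0 := (map_ne_zero_iff _ toReal_two_injective).mpr (star_ne_zero.mpr hz)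
  positivity

end IsGaloisConj

theorem ω_eq : ω = ⟨√2 / 2, √2 / 2⟩ := by
  apply Complex.ext <;> simp [ω, div_re, div_im, normSq_ofReal]

theorem zω_re (a b c d : ℤ) : (zω a b c d).re = d + (c - a) * √2 / 2 := by
  simp only [zω, ω_eq, pow_succ, pow_zero, one_mul, add_re, mul_re, mul_im, intCast_re, intCast_im]
  linear_combination (-a * √2 / 4 : ℝ) * sqrt_two_sq

theorem zω_im (a b c d : ℤ) : (zω a b c d).im = b + (a + c) * √2 / 2 := by
  simp only [zω, ω_eq, pow_succ, pow_zero, one_mul, add_im, mul_im, mul_re, intCast_re, intCast_im]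
  linear_combination (a * √2 / 4 + b / 2 : ℝ) * sqrt_two_sq

theorem normSq_zω (a b c d : ℤ) :
    normSq (zω a b c d) = φ ⟨a ^ 2 + b ^ 2 + c ^ 2 + d ^ 2, a * b + b * c + c * d - a * d⟩ := by
  rw [normSq_apply, zω_re, zω_im, toReal_two_apply]
  push_cast
  linear_combination ((a ^ 2 + c ^ 2) / 2 : ℝ) * sqrt_two_sq

theorem toReal_two_mul_zω (v : ℤ√2) (a b c d : ℤ) :
    (φ v : ℂ) * zω a b c d = zω (v.re * a + v.im * (b - d)) (v.re * b + v.im * (c + a))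
      (v.re * c + v.im * (d + b)) (v.re * d + v.im * (c - a)) := by
  apply Complex.ext
  · simp only [mul_re, ofReal_re, ofReal_im, zω_re, zω_im, toReal_two_apply]
    push_cast
    linear_combination (v.im * (c - a) / 2 : ℝ) * sqrt_two_sq
  · simp only [mul_im, ofReal_re, ofReal_im, zω_re, zω_im, toReal_two_apply]
    push_cast
    linear_combination (v.im * (a + c) / 2 : ℝ) * sqrt_two_sq

theorem inDω_zero : inDω 0 := ⟨0, 0, 0, 0, 0, by simp [zω]⟩

theorem inDω_toReal_two_mul {t : ℂ} (ht : inDω t) (v : ℤ√2) : inDω (φ v * t) := by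
  obtain ⟨k, a, b, c, d, h⟩ := ht
  exact ⟨k, _, _, _, _, by rw [mul_left_comm, h, toReal_two_mul_zω]⟩

theorem exists_isGaloisConj_normSq {t : ℂ} (ht : inDω t) :
    ∃ xb, IsGaloisConj (normSq t) xb ∧ 0 ≤ xb := by
  obtain ⟨k, a, b, c, d, h⟩ := ht
  have hnorm : normSq t = normSq (zω a b c d) / 2 ^ k := by
    rw [← h, normSq_mul, map_pow, normSq_ofReal, Real.mul_self_sqrt zero_le_two]
    field_simp
  -- `ω ↦ ω³` extends `•` to `D[ω]`, commutes with `†`, and maps `zω a b c d` to `zω c (-b) a d`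
  refine ⟨normSq (zω c (-b) a d) / 2 ^ k, ⟨_, k, by rw [hnorm, normSq_zω], ?_⟩,
    div_nonneg (normSq_nonneg _) (by positivity)⟩
  rw [normSq_zω]
  congr 2
  ext <;> simp <;> ring

theorem exists_normSq_eq_of_normSq_eq_sq_mul {t' : ℂ} (ht' : inDω t') {v : ℤ√2} (hv : IsUnit v)
    {x : ℝ} (h : normSq t' = φ (v ^ 2) * x) : ∃ t, inDω t ∧ normSq t = x := by
  obtain ⟨v', hv'⟩ := hv.exists_right_inv
  refine ⟨φ v' * t', inDω_toReal_two_mul ht' v', ?_⟩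
  have : φ v * φ v' = 1 := by rw [← map_mul, hv', map_one]
  rw [normSq_mul, normSq_ofReal, h, map_pow]
  linear_combination (φ v * φ v' + 1) * x * this

theorem conj_mul_self_eq_ofReal_iff {t : ℂ} {x : ℝ} : starRingEnd ℂ t * t = x ↔ normSq t = x := by
  rw [← normSq_eq_conj_mul_self, ofReal_inj]

/-- For ξ ∈ D[√2] with conjugate ξ•, the equation t†t = ξ has a solution t ∈ D[ω] iff
    ξ is doubly positive and ξ is †-decomposable up to a unit of ℤ[√2]. -/
theorem diophantine_solvable_iff (ξ ξb : ℝ)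
    (hξ : ∃ a b : ℤ, ∃ k : ℕ, ξ = ((a : ℝ) + b * Real.sqrt 2) / 2 ^ k ∧
            ξb = ((a : ℝ) - b * Real.sqrt 2) / 2 ^ k) :
    (∃ t : ℂ, inDω t ∧ (starRingEnd ℂ) t * t = (ξ : ℂ)) ↔
    (0 ≤ ξ ∧ 0 ≤ ξb ∧
      ∃ t' : ℂ, ∃ u : ℝ, inDω t' ∧ unitZsqrt2 u ∧
        (starRingEnd ℂ) t' * t' = ((u * ξ : ℝ) : ℂ)) := by
  have hconj : IsGaloisConj ξ ξb := by
    obtain ⟨a, b, k, rfl, rfl⟩ := hξ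
    exact .of_int a b k
  simp only [conj_mul_self_eq_ofReal_iff]
  constructor
  · rintro ⟨t, ht, rfl⟩
    obtain ⟨xb, hxb, hxb0⟩ := exists_isGaloisConj_normSq ht
    exact ⟨normSq_nonneg t, hconj.unique hxb ▸ hxb0, t, 1, ht, ⟨1, 0, 1, 0, by norm_num⟩,
      (one_mul _).symm⟩
  · rintro ⟨hξ0, hξb0, t', u, ht', hu, ht'u⟩
    obtain ⟨w, hw, rfl⟩ := exists_isUnit_of_unitZsqrt2 hu
    rcases hξ0.eq_or_lt with rfl | hξpos
    · exact ⟨0, inDω_zero, normSq_zero⟩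
    have hξbpos : 0 < ξb := hξb0.lt_of_ne (hconj.conj_ne_zero hξpos.ne').symm
    obtain ⟨xb, hxb, hxb0⟩ := exists_isGaloisConj_normSq ht'
    rw [ht'u] at hxb
    have hxb_eq : xb = φ (star w) * ξb := hxb.unique ((IsGaloisConj.of_toReal_two w).mul hconj)
    have hw_pos := pos_toReal_two_of_isUnit hw hξpos (ht'u ▸ normSq_nonneg t')
    have hw_pos' := pos_toReal_two_of_isUnit hw.star hξbpos (hxb_eq ▸ hxb0)
    obtain ⟨v, rfl⟩ := exists_eq_sq_of_isUnit hw hw_pos hw_pos'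
    exact exists_normSq_eq_of_normSq_eq_sq_mul ht' ((isUnit_pow_iff two_ne_zero).mp hw) ht'u
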